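/- arXiv:1803.06915 — 3 statements merged into one kernel-verified Lean document; each statement's English description precedes it below -/
import Mathlib

section
/- Let A be an n×n real symmetric matrix, let V_1 ∪ … ∪ V_m be an equitable partition of {1,…,n} for A with characteristic matrix S, and let B = Q(A) = Λ⁻¹ Sᵀ A S be the quotient matrix. Then for any basis {v_1,…,v_m} of ℝ^m consisting of eigenvectors of B, there exist vectors w_1,…,w_{n−m} ∈ ℝ^n, each an eigenvector of A, satisfying Sᵀ w_j = 0 for all j, such that {S v_1,…,S v_m, w_1,…,w_{n−m}} is a basis of ℝ^n consisting of eigenvectors of A. -/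
/-! Equitability says that the rows of `A S` are constant on blocks, so `A S = S D` for some `D`,
and then `Λ⁻¹ Sᵀ A S = Λ⁻¹ (Sᵀ S) D = D`: thus `A S = S B`. Hence `S` maps eigenvectors of `B`
to eigenvectors of `A`, and the column space of `S` is `A`-invariant. As `A` is symmetric, so is
its orthogonal complement `ker Sᵀ`, and an orthonormal eigenbasis of `A` on that complement
completes the `S vₖ` to a basis. -/

open Matrix Finset Submodule Module WithLp

section PartitionMatrix

variable {ι κ ν R : Type*} [DecidableEq κ]

/-- The characteristic matrix `S` of the partition of `ι` into the fibres of `p`. -/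
def partitionMatrix (R : Type*) [Zero R] [One R] (p : ι → κ) : Matrix ι κ R :=
  of fun i k => if p i = k then 1 else 0

variable [NonAssocSemiring R]

theorem partitionMatrix_mulVec_apply [Fintype κ] (p : ι → κ) (x : κ → R) (i : ι) :
    (partitionMatrix R p *ᵥ x) i = x (p i) := by
  simp [partitionMatrix, mulVec, dotProduct]

theorem partitionMatrix_mulVec_injective [Fintype κ] {p : ι → κ} (hp : Function.Surjective p) :
    Function.Injective (partitionMatrix R p).mulVec := by
  intro x y hxy
  funext k
  obtain ⟨i, rfl⟩ := hp k
  simpa only [partitionMatrix_mulVec_apply] using congrFun hxy i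

theorem partitionMatrix_mul_apply [Fintype κ] (p : ι → κ) (D : Matrix κ ν R) (i : ι) (l : ν) :
    (partitionMatrix R p * D) i l = D (p i) l := by
  simp [partitionMatrix, mul_apply]

theorem mul_partitionMatrix_apply [Fintype ι] (p : ι → κ) (A : Matrix ν ι R) (i : ν) (k : κ) :
    (A * partitionMatrix R p) i k = ∑ j ∈ univ.filter (fun j => p j = k), A i j := by
  simp [partitionMatrix, mul_apply, Finset.sum_filter]

theorem partitionMatrix_transpose_mul_self [Fintype ι] (p : ι → κ) :
    (partitionMatrix R p)ᵀ * partitionMatrix R p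
      = diagonal fun k => ((univ.filter fun i => p i = k).card : R) := by
  ext k l
  rcases eq_or_ne k l with rfl | hkl
  · simp [partitionMatrix, mul_apply, ← ite_and, Finset.sum_boole]
  · have hdisj : univ.filter (fun i => p i = l ∧ p i = k) = ∅ :=
      filter_eq_empty_iff.2 fun _ _ h => hkl (h.2.symm.trans h.1)
    simp [partitionMatrix, mul_apply, hkl, ← ite_and, hdisj]

end PartitionMatrix

theorem mul_partitionMatrix_eq_of_equitable {ι κ R : Type*} [Fintype ι] [Fintype κ]
    [DecidableEq κ] [Field R] [CharZero R] (A : Matrix ι ι R) {p : ι → κ}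
    (hp : Function.Surjective p)
    (heq : ∀ i₁ i₂ : ι, p i₁ = p i₂ → ∀ l : κ,
        ∑ j ∈ univ.filter (fun j => p j = l), A i₁ j
          = ∑ j ∈ univ.filter (fun j => p j = l), A i₂ j) :
    A * partitionMatrix R p = partitionMatrix R p *
      ((diagonal fun k => ((univ.filter fun i => p i = k).card : R))⁻¹
        * (partitionMatrix R p)ᵀ * A * partitionMatrix R p) := by
  set P := partitionMatrix R p
  set Λ := diagonal fun k => ((univ.filter fun i => p i = k).card : R)
  set D := (A * P).submatrix (Function.surjInv hp) id
  have hAP : A * P = P * D := by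
    ext i l
    rw [partitionMatrix_mul_apply]
    change (A * P) i l = (A * P) (Function.surjInv hp (p i)) l
    rw [mul_partitionMatrix_apply, mul_partitionMatrix_apply,
      heq _ _ (Function.surjInv_eq hp (p i)).symm]
  have hΛ : IsUnit Λ.det := by
    rw [det_diagonal]
    refine (Finset.prod_ne_zero_iff.2 fun k _ => ?_).isUnit
    obtain ⟨i, hi⟩ := hp k
    exact Nat.cast_ne_zero.2 (Finset.card_ne_zero.2 ⟨i, by simp [hi]⟩)
  calc A * P = P * D := hAP
    _ = P * (Λ⁻¹ * (Pᵀ * P) * D) := by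
      rw [partitionMatrix_transpose_mul_self, nonsing_inv_mul _ hΛ, Matrix.one_mul]
    _ = P * (Λ⁻¹ * Pᵀ * A * P) := by
      simp only [Matrix.mul_assoc, hAP]

theorem Module.End.span_eigenvectors_mem_invtSubmodule {ι R M : Type*} [Semiring R]
    [AddCommMonoid M] [Module R M] {f : Module.End R M} {u : ι → M}
    (hu : ∀ k, ∃ μ : R, f (u k) = μ • u k) :
    span R (Set.range u) ∈ f.invtSubmodule := by
  rw [Module.End.mem_invtSubmodule, span_le]
  rintro _ ⟨k, rfl⟩
  obtain ⟨μ, hμ⟩ := hu k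
  simpa [hμ] using smul_mem _ μ (subset_span (Set.mem_range_self k))

theorem Submodule.span_range_comp_of_span_eq_top {ι R M N : Type*} [Semiring R]
    [AddCommMonoid M] [Module R M] [AddCommMonoid N] [Module R N] (f : M →ₗ[R] N) {v : ι → M}
    (hv : span R (Set.range v) = ⊤) : span R (Set.range (f ∘ v)) = LinearMap.range f := by
  rw [Set.range_comp, span_image, hv, Submodule.map_top]

namespace LinearMap.IsSymmetric

variable {𝕜 E : Type*} [RCLike 𝕜] [NormedAddCommGroup E] [InnerProductSpace 𝕜 E]
  [FiniteDimensional 𝕜 E] {f : Module.End 𝕜 E}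

theorem exists_eigenvectors_span_eq (hf : f.IsSymmetric) {U : Submodule 𝕜 E}
    (hU : U ∈ f.invtSubmodule) {d : ℕ} (hd : finrank 𝕜 U = d) :
    ∃ w : Fin d → E, (∀ j, w j ∈ U) ∧ (∀ j, ∃ μ : 𝕜, f (w j) = μ • w j) ∧
      span 𝕜 (Set.range w) = U := by
  have hfU := hf.restrict_invariant ((Module.End.mem_invtSubmodule_iff_forall_mem_of_mem f).1 hU)
  set b := hfU.eigenvectorBasis hd
  refine ⟨fun j => b j, fun j => (b j).2,
    fun j => ⟨_, congrArg Subtype.val (hfU.apply_eigenvectorBasis hd j)⟩, ?_⟩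
  exact (span_range_comp_of_span_eq_top U.subtype b.toBasis.span_eq).trans U.range_subtype

theorem exists_basis_sum_elim_eigenvectors (hf : f.IsSymmetric) {ι : Type*} [Fintype ι]
    {u : ι → E} (hu : ∀ k, ∃ μ : 𝕜, f (u k) = μ • u k) (hli : LinearIndependent 𝕜 u) {d : ℕ}
    (hd : Fintype.card ι + d = finrank 𝕜 E) :
    ∃ b : Basis (ι ⊕ Fin d) 𝕜 E, (∀ k, b (.inl k) = u k) ∧
      ∀ j, b (.inr j) ∈ (span 𝕜 (Set.range u))ᗮ ∧ ∃ μ : 𝕜, f (b (.inr j)) = μ • b (.inr j) := by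
  set U := span 𝕜 (Set.range u)
  have hUinv : U ∈ f.invtSubmodule := Module.End.span_eigenvectors_mem_invtSubmodule hu
  have hdim : finrank 𝕜 Uᗮ = d := by
    have := U.finrank_add_finrank_orthogonal
    rw [finrank_span_eq_card hli] at this
    omega
  obtain ⟨w, hwU, hweig, hwspan⟩ :=
    hf.exists_eigenvectors_span_eq (hf.orthogonalComplement_mem_invtSubmodule hUinv) hdim
  have hspan : ⊤ ≤ span 𝕜 (Set.range (Sum.elim u w)) := by
    rw [Set.Sum.elim_range, span_union, hwspan, sup_orthogonal_of_hasOrthogonalProjection]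
  refine ⟨basisOfTopLeSpanOfCardEqFinrank _ hspan (by simpa using hd), fun k => ?_, fun j => ?_⟩
  · simp
  · simpa using ⟨hwU j, hweig j⟩

end LinearMap.IsSymmetric

namespace Matrix

theorem mulVec_mulVec_eq_smul_of_mul_eq_mul {ι κ R : Type*} [Fintype ι] [Fintype κ]
    [CommSemiring R] {A : Matrix ι ι R} {S : Matrix ι κ R} {B : Matrix κ κ R}
    (h : A * S = S * B) {x : κ → R} {μ : R} (hx : B *ᵥ x = μ • x) :
    A *ᵥ (S *ᵥ x) = μ • S *ᵥ x := by
  rw [mulVec_mulVec, h, ← mulVec_mulVec, hx, mulVec_smul]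

variable {𝕜 ι κ : Type*} [RCLike 𝕜] [Fintype ι] [DecidableEq ι] [Fintype κ] [DecidableEq κ]

theorem mem_orthogonal_range_toEuclideanLin_iff {S : Matrix ι κ 𝕜} {w : EuclideanSpace 𝕜 ι} :
    w ∈ (LinearMap.range S.toEuclideanLin)ᗮ ↔ Sᴴ *ᵥ ofLp w = 0 := by
  rw [LinearMap.orthogonal_range, ← toEuclideanLin_conjTranspose_eq_adjoint, LinearMap.mem_ker,
    toLpLin_apply, toLp_eq_zero]

theorem IsHermitian.exists_basis_sum_elim_eigenvectors {A : Matrix ι ι 𝕜} (hA : A.IsHermitian)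
    {S : Matrix ι κ 𝕜} (hS : Function.Injective S.mulVec) {v : κ → κ → 𝕜}
    (hvLI : LinearIndependent 𝕜 v) (hv : ∀ k, ∃ μ : 𝕜, A *ᵥ (S *ᵥ v k) = μ • S *ᵥ v k)
    {d : ℕ} (hd : Fintype.card κ + d = Fintype.card ι) :
    ∃ b : Basis (κ ⊕ Fin d) 𝕜 (ι → 𝕜), (∀ k, b (.inl k) = S *ᵥ v k) ∧
      ∀ j, Sᴴ *ᵥ b (.inr j) = 0 ∧ ∃ μ : 𝕜, A *ᵥ b (.inr j) = μ • b (.inr j) := by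
  set L := S.toEuclideanLin ∘ₗ (WithLp.linearEquiv 2 𝕜 (κ → 𝕜)).symm.toLinearMap
  have hL : Function.Injective L := fun x y hxy => hS (congrArg ofLp hxy)
  have hvspan : span 𝕜 (Set.range v) = ⊤ := hvLI.span_eq_top_of_card_eq_finrank' (by simp)
  obtain ⟨b, hb_inl, hb_inr⟩ :=
    (isSymmetric_toEuclideanLin_iff.2 hA).exists_basis_sum_elim_eigenvectors (u := L ∘ v)
      (fun k => (hv k).imp fun μ hμ => congrArg (toLp 2) hμ)
      (hvLI.map' L (LinearMap.ker_eq_bot.2 hL)) (by simpa using hd)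
  refine ⟨b.map (WithLp.linearEquiv 2 𝕜 (ι → 𝕜)), fun k => congrArg ofLp (hb_inl k),
    fun j => ⟨?_, ?_⟩⟩
  · have hw := (hb_inr j).1
    rw [span_range_comp_of_span_eq_top L hvspan,
      LinearMap.range_comp_of_range_eq_top _ (LinearEquiv.range _)] at hw
    simpa using mem_orthogonal_range_toEuclideanLin_iff.1 hw
  · obtain ⟨μ, hμ⟩ := (hb_inr j).2
    exact ⟨μ, by simpa using congrArg ofLp hμ⟩

end Matrix

theorem spectral_decomposition_equitable_general {n m : ℕ}
    (A : Matrix (Fin n) (Fin n) ℝ) (hsymm : A.IsSymm)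
    (p : Fin n → Fin m) (hp : Function.Surjective p)
    (S : Matrix (Fin n) (Fin m) ℝ)
    (hS : S = fun i k => if p i = k then (1 : ℝ) else 0)
    (heq : ∀ i₁ i₂ : Fin n, p i₁ = p i₂ → ∀ l : Fin m,
        ∑ j ∈ Finset.univ.filter (fun j => p j = l), A i₁ j
          = ∑ j ∈ Finset.univ.filter (fun j => p j = l), A i₂ j)
    (Λ : Matrix (Fin m) (Fin m) ℝ)
    (hΛ : Λ = Matrix.diagonal fun k => ((Finset.univ.filter fun i => p i = k).card : ℝ))
    (B : Matrix (Fin m) (Fin m) ℝ) (hB : B = Λ⁻¹ * Sᵀ * A * S)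
    (v : Fin m → (Fin m → ℝ))
    (hvEig : ∀ k, ∃ μ : ℝ, B.mulVec (v k) = μ • v k)
    (hvLI : LinearIndependent ℝ v) :
    ∃ w : Fin (n - m) → (Fin n → ℝ),
      (∀ j, ∃ μ : ℝ, A.mulVec (w j) = μ • w j) ∧
      (∀ j, Sᵀ.mulVec (w j) = 0) ∧
      (∀ k, ∃ μ : ℝ, A.mulVec (S.mulVec (v k)) = μ • S.mulVec (v k)) ∧
      LinearIndependent ℝ (Sum.elim (fun k => S.mulVec (v k)) w) ∧
      Submodule.span ℝ (Set.range (Sum.elim (fun k => S.mulVec (v k)) w)) = ⊤ := by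
  have hSP : S = partitionMatrix ℝ p := hS
  have hAS : A * S = S * B := by
    rw [hB, hΛ, hSP]
    exact mul_partitionMatrix_eq_of_equitable A hp heq
  have hSv : ∀ k, ∃ μ : ℝ, A *ᵥ (S *ᵥ v k) = μ • S *ᵥ v k :=
    fun k => (hvEig k).imp fun _ => mulVec_mulVec_eq_smul_of_mul_eq_mul hAS
  have hmn : m ≤ n := by simpa using Fintype.card_le_of_surjective p hp
  obtain ⟨b, hb_inl, hb_inr⟩ :=
    (isHermitian_iff_isSymm.2 hsymm).exists_basis_sum_elim_eigenvectors
      (hSP ▸ partitionMatrix_mulVec_injective hp) hvLI hSv (d := n - m)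
      (by simp only [Fintype.card_fin]; omega)
  have hb : Sum.elim (fun k => S *ᵥ v k) (fun j => b (.inr j)) = b := by
    funext x
    cases x <;> simp [hb_inl]
  refine ⟨fun j => b (.inr j), fun j => (hb_inr j).2, fun j => by simpa using (hb_inr j).1, hSv,
    hb ▸ b.linearIndependent, hb ▸ b.span_eq⟩

/-- Let `A` be an `n×n` real symmetric matrix, let `V_1 ∪ … ∪ V_m` be an
equitable partition of `{1,…,n}` for `A` (given by the surjective block-assignment map `p`)
with characteristic matrix `S`, and let `B = Q(A) = Λ⁻¹ Sᵀ A S` be the quotient matrix.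
Then for any basis `{v_1,…,v_m}` of `ℝ^m` consisting of eigenvectors of `B`, there exist
vectors `w_1,…,w_{n−m} ∈ ℝ^n`, each an eigenvector of `A`, satisfying `Sᵀ w_j = 0` for all
`j`, such that `{S v_1,…,S v_m, w_1,…,w_{n−m}}` is a basis of `ℝ^n` consisting of
eigenvectors of `A`. -/
theorem spectral_decomposition_equitable {n m : ℕ}
    (A : Matrix (Fin n) (Fin n) ℝ) (hsymm : A.IsSymm)
    (p : Fin n → Fin m) (hp : Function.Surjective p)
    (S : Matrix (Fin n) (Fin m) ℝ)
    (hS : S = fun i k => if p i = k then (1 : ℝ) else 0)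
    (heq : ∀ i₁ i₂ : Fin n, p i₁ = p i₂ → ∀ l : Fin m,
        ∑ j ∈ Finset.univ.filter (fun j => p j = l), A i₁ j
          = ∑ j ∈ Finset.univ.filter (fun j => p j = l), A i₂ j)
    (Λ : Matrix (Fin m) (Fin m) ℝ)
    (hΛ : Λ = Matrix.diagonal fun k => ((Finset.univ.filter fun i => p i = k).card : ℝ))
    (B : Matrix (Fin m) (Fin m) ℝ) (hB : B = Λ⁻¹ * Sᵀ * A * S)
    (v : Fin m → (Fin m → ℝ))
    (hvEig : ∀ k, ∃ μ : ℝ, B.mulVec (v k) = μ • v k)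
    (hvLI : LinearIndependent ℝ v)
    (hvSpan : Submodule.span ℝ (Set.range v) = ⊤) :
    ∃ w : Fin (n - m) → (Fin n → ℝ),
      (∀ j, ∃ μ : ℝ, A.mulVec (w j) = μ • w j) ∧
      (∀ j, Sᵀ.mulVec (w j) = 0) ∧
      (∀ k, ∃ μ : ℝ, A.mulVec (S.mulVec (v k)) = μ • S.mulVec (v k)) ∧
      LinearIndependent ℝ (Sum.elim (fun k => S.mulVec (v k)) w) ∧
      Submodule.span ℝ (Set.range (Sum.elim (fun k => S.mulVec (v k)) w)) = ⊤ :=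
  spectral_decomposition_equitable_general A hsymm p hp S hS heq Λ hΛ B hB v hvEig hvLI
end

section
/- Let A = (a_{ij}) be an n×n real symmetric matrix, let M ⊆ {1,…,n} be a subset partitioned into nonempty blocks V_1 ∪ … ∪ V_m = M, and suppose that every index i ∉ M connects uniformly to each block, i.e., for each k and all j_1, j_2 ∈ V_k, a_{i j_1} = a_{i j_2}. Let w ∈ ℝ^M satisfy Σ_{j ∈ V_k} w_j = 0 for every k, and suppose w is an eigenvector with eigenvalue λ of the principal submatrix of A on M. Then the vector w̃ ∈ ℝ^n that equals w on M and is zero outside M satisfies A w̃ = λ w̃. -/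
open Matrix Finset

/-- Let `A = (a_{ij})` be an `n×n` real symmetric matrix, let
`M ⊆ {1,…,n}` be a subset partitioned into nonempty pairwise-disjoint blocks
`V_1 ∪ … ∪ V_m = M`, and suppose that every index `i ∉ M` connects uniformly to each block.
Let `w̃ ∈ ℝ^n` vanish outside `M`, have entries summing to zero on every block, and restrict
on `M` to an eigenvector with eigenvalue `λ` of the principal submatrix of `A` on `M`
(i.e. `Σ_{j ∈ M} a_{ij} w̃_j = λ w̃_i` for all `i ∈ M`).  Then `A w̃ = λ w̃`. -/
theorem redundant_eigenvector_extends {n m : ℕ}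
    (A : Matrix (Fin n) (Fin n) ℝ) (hsymm : A.IsSymm)
    (M : Finset (Fin n)) (V : Fin m → Finset (Fin n))
    (hVability : ∀ k, (V k).Nonempty)
    (hVdisj : ∀ k l, k ≠ l → Disjoint (V k) (V l))
    (hVunion : Finset.univ.biUnion V = M)
    (huniform : ∀ i ∉ M, ∀ k : Fin m, ∀ j₁ ∈ V k, ∀ j₂ ∈ V k, A i j₁ = A i j₂)
    (w : Fin n → ℝ) (hsupp : ∀ i ∉ M, w i = 0)
    (hred : ∀ k : Fin m, ∑ j ∈ V k, w j = 0)
    (hw : w ≠ 0) (lam : ℝ)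
    (hev : ∀ i ∈ M, ∑ j ∈ M, A i j * w j = lam * w i) :
    A.mulVec w = lam • w := by
  funext i
  have hsum : (A.mulVec w) i = ∑ j ∈ M, A i j * w j := by
    rw [mulVec, dotProduct]
    rw [← Finset.sum_subset (Finset.subset_univ M)]
    intro j _ hj
    rw [hsupp j hj, mul_zero]
  by_cases hi : i ∈ M
  · simp only [Pi.smul_apply, smul_eq_mul]
    rw [hsum, hev i hi]
  · have : ∑ j ∈ M, A i j * w j = 0 := by
      rw [← hVunion, Finset.sum_biUnion]
      · apply Finset.sum_eq_zero
        intro k _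
        obtain ⟨j₀, hj₀⟩ := hVability k
        calc ∑ j ∈ V k, A i j * w j = ∑ j ∈ V k, A i j₀ * w j := by
              apply Finset.sum_congr rfl
              intro j hj
              rw [huniform i hi k j hj j₀ hj₀]
          _ = A i j₀ * ∑ j ∈ V k, w j := by rw [Finset.mul_sum]
          _ = 0 := by rw [hred k, mul_zero]
      · intro k _ l _ hkl
        exact hVdisj k l hkl
    simp only [Pi.smul_apply, smul_eq_mul]
    rw [hsum, this, hsupp i hi, mul_zero]
end

section
/- Let n ≥ 2 and let A be the 2n×2n symmetric block matrix with diagonal blocks A_n^{α_1,β_1}, A_n^{α_2,β_2} and both off-diagonal blocks equal to A_n^{γ,δ}. Set a = α_1 − β_1, b = α_2 − β_2, c = γ − δ, and assume c ≠ 0. Let κ_1, κ_2 be the two (distinct, real) solutions of c κ² + (b − a)κ − c = 0. Then for each 2 ≤ i ≤ n and each s ∈ {1,2}, the vector (κ_s e_i | e_i) is an eigenvector of A with eigenvalue λ_s = −b − c κ_s; in particular λ_1 = (−(a+b) + √((a−b)² + 4c²))/2 and λ_2 = (−(a+b) − √((a−b)² + 4c²))/2, each with eigenspace dimension at least n−1.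 -/
/-!
A uniform block `A_n^{α,β}` acts on every zero-sum vector as multiplication by `β - α`, and each
`e_i` sums to zero. Hence on vectors `(κ e_i | e_i)` the block matrix acts as the `2 × 2` matrix
`[[-a, -c], [-c, -b]]` on `(κ, 1)`, and `κ` being a root of `c κ² + (b - a) κ - c` is exactly the
condition for `(κ, 1)` to be an eigenvector, with eigenvalue `λ = -b - c κ`. This `λ` is a root of
`λ² + (a + b) λ + ab - c²`, whose roots are the two stated values. The `e_i`, `i ≠ 0`, are linearly
independent, giving `n - 1` independent eigenvectors for each `λ`.
-/

open Matrix Finset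

/-- The adjacency matrix `A_n^{α,β}` of a uniform graph: off-diagonal entries `α`,
diagonal entries `β`. -/
def uniformMatrix (n : ℕ) (α β : ℝ) : Matrix (Fin n) (Fin n) ℝ :=
  fun i j => if i = j then β else α

/-- The vector `e_i ∈ ℝ^n` with entry `1` at position `0` (the "first" position),
entry `-1` at position `i`, and `0` elsewhere (intended for `(i : ℕ) ≠ 0`). -/
def evec (n : ℕ) (i : Fin n) : Fin n → ℝ :=
  fun j => if (j : ℕ) = 0 then 1 else if j = i then -1 else 0

lemma uniformMatrix_mulVec_of_sum_eq_zero {n : ℕ} (α β : ℝ) {v : Fin n → ℝ}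
    (hv : ∑ j, v j = 0) : uniformMatrix n α β *ᵥ v = (β - α) • v := by
  have hsplit :
      uniformMatrix n α β = (β - α) • (1 : Matrix (Fin n) (Fin n) ℝ) + of fun _ _ => α := by
    ext i j
    by_cases h : i = j <;> simp [uniformMatrix, h, one_apply]
  have hconst : (of fun _ _ => α : Matrix (Fin n) (Fin n) ℝ) *ᵥ v = 0 := by
    ext j
    simp [mulVec, dotProduct, ← Finset.mul_sum, hv]
  rw [hsplit, add_mulVec, smul_mulVec, one_mulVec, hconst, add_zero]

lemma evec_eq_single_sub_single {n : ℕ} {i : Fin n} (hi : (i : ℕ) ≠ 0) :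
    evec n i = Pi.single ⟨0, i.pos⟩ 1 - Pi.single i 1 := by
  ext j
  simp only [evec, Pi.sub_apply, Pi.single_apply, Fin.ext_iff]
  split_ifs <;> norm_num
  omega

lemma sum_evec {n : ℕ} {i : Fin n} (hi : (i : ℕ) ≠ 0) : ∑ j, evec n i j = 0 := by
  simp [evec_eq_single_sub_single hi, Finset.sum_sub_distrib]

lemma uniformMatrix_mulVec_evec {n : ℕ} (α β : ℝ) {i : Fin n} (hi : (i : ℕ) ≠ 0) :
    uniformMatrix n α β *ᵥ evec n i = (β - α) • evec n i :=
  uniformMatrix_mulVec_of_sum_eq_zero α β (sum_evec hi)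

lemma linearIndependent_evec_succ (m : ℕ) :
    LinearIndependent ℝ fun j : Fin m => evec (m + 1) j.succ := by
  rw [Fintype.linearIndependent_iff]
  intro g hg j
  simpa [evec, Finset.sum_apply] using congrFun hg j.succ

lemma fromBlocks_mulVec_sum_elim_smul {ι R : Type*} [Fintype ι] [CommRing R]
    {P Q S : Matrix ι ι R} {v : ι → R} {p q r κ : R}
    (hP : P *ᵥ v = p • v) (hQ : Q *ᵥ v = q • v) (hS : S *ᵥ v = r • v)
    (hκ : q * κ ^ 2 + (r - p) * κ - q = 0) :
    fromBlocks P Q Q S *ᵥ Sum.elim (κ • v) v = (q * κ + r) • Sum.elim (κ • v) v := by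
  have htop : P *ᵥ (κ • v) + Q *ᵥ v = ((q * κ + r) * κ) • v := by
    rw [mulVec_smul, hP, hQ, smul_smul, ← add_smul]
    congr 1
    linear_combination -hκ
  have hbot : Q *ᵥ (κ • v) + S *ᵥ v = (q * κ + r) • v := by
    rw [mulVec_smul, hQ, hS, smul_smul, ← add_smul, mul_comm]
  rw [fromBlocks_mulVec, Sum.elim_comp_inl, Sum.elim_comp_inr, htop, hbot, ← smul_smul]
  ext (j | j) <;> rfl

lemma Module.End.card_le_finrank_eigenspace {K M ι : Type*} [Field K] [AddCommGroup M]
    [Module K M] [FiniteDimensional K M] [Fintype ι] {f : Module.End K M} {μ : K} {w : ι → M}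
    (hw : LinearIndependent K w) (hfw : ∀ i, f (w i) = μ • w i) :
    Fintype.card ι ≤ Module.finrank K (f.eigenspace μ) := by
  have hspan : Submodule.span K (Set.range w) ≤ f.eigenspace μ := by
    rw [Submodule.span_le]
    rintro _ ⟨i, rfl⟩
    exact Module.End.mem_eigenspace_iff.mpr (hfw i)
  exact finrank_span_eq_card hw ▸ Submodule.finrank_mono hspan

lemma neg_sub_mul_root_mem_pair {a b c κ : ℝ}
    (hκ : c * κ ^ 2 + (b - a) * κ - c = 0) :
    -b - c * κ ∈ ({(-(a + b) + √((a - b) ^ 2 + 4 * c ^ 2)) / 2,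
      (-(a + b) - √((a - b) ^ 2 + 4 * c ^ 2)) / 2} : Set ℝ) := by
  have hdiscrim : discrim 1 (a + b) (a * b - c ^ 2)
      = √((a - b) ^ 2 + 4 * c ^ 2) * √((a - b) ^ 2 + 4 * c ^ 2) := by
    rw [Real.mul_self_sqrt (by positivity), discrim]
    ring
  have hquad :
      1 * ((-b - c * κ) * (-b - c * κ)) + (a + b) * (-b - c * κ) + (a * b - c ^ 2) = 0 := by
    linear_combination c * hκ
  simpa using (quadratic_eq_zero_iff one_ne_zero hdiscrim _).mp hquad

lemma Set.pair_eq_pair_of_ne {α : Type*} {x y u v : α} (hxy : x ≠ y)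
    (hx : x ∈ ({u, v} : Set α)) (hy : y ∈ ({u, v} : Set α)) : ({x, y} : Set α) = {u, v} := by
  rcases hx with rfl | rfl <;> rcases hy with rfl | rfl
  all_goals first | exact absurd rfl hxy | exact Set.pair_comm _ _ | rfl

theorem two_orbit_bsm_redundant_spectrum_general {n : ℕ}
    (α₁ β₁ α₂ β₂ γ δ a b c : ℝ)
    (ha : a = α₁ - β₁) (hb : b = α₂ - β₂) (hc : c = γ - δ) (hc0 : c ≠ 0)
    (κ : Fin 2 → ℝ)
    (hκroot : ∀ s, c * (κ s) ^ 2 + (b - a) * κ s - c = 0)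
    (hκne : κ 0 ≠ κ 1)
    (A : Matrix (Fin n ⊕ Fin n) (Fin n ⊕ Fin n) ℝ)
    (hA : A = Matrix.fromBlocks (uniformMatrix n α₁ β₁) (uniformMatrix n γ δ)
        (uniformMatrix n γ δ) (uniformMatrix n α₂ β₂)) :
    (∀ s : Fin 2, ∀ i : Fin n, (i : ℕ) ≠ 0 →
      A.mulVec (Sum.elim (κ s • evec n i) (evec n i))
        = (-b - c * κ s) • Sum.elim (κ s • evec n i) (evec n i)) ∧
    ({-b - c * κ 0, -b - c * κ 1} : Set ℝ)
      = {(-(a + b) + Real.sqrt ((a - b) ^ 2 + 4 * c ^ 2)) / 2,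
         (-(a + b) - Real.sqrt ((a - b) ^ 2 + 4 * c ^ 2)) / 2} ∧
    (∀ s : Fin 2,
      n - 1 ≤ Module.finrank ℝ
        (Module.End.eigenspace (Matrix.mulVecLin A) (-b - c * κ s))) := by
  have heigen : ∀ s : Fin 2, ∀ i : Fin n, (i : ℕ) ≠ 0 →
      A.mulVec (Sum.elim (κ s • evec n i) (evec n i))
        = (-b - c * κ s) • Sum.elim (κ s • evec n i) (evec n i) := by
    intro s i hi
    have h := fromBlocks_mulVec_sum_elim_smul (uniformMatrix_mulVec_evec α₁ β₁ hi)
      (uniformMatrix_mulVec_evec γ δ hi) (uniformMatrix_mulVec_evec α₂ β₂ hi)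
      (κ := κ s) (by subst ha hb hc; linear_combination -hκroot s)
    rw [hA, h]
    congr 1
    subst hb hc
    ring
  refine ⟨heigen, ?_, fun s => ?_⟩
  · refine Set.pair_eq_pair_of_ne ?_ (neg_sub_mul_root_mem_pair (hκroot 0))
      (neg_sub_mul_root_mem_pair (hκroot 1))
    intro h
    exact hκne (mul_left_cancel₀ hc0 (by linarith))
  · obtain _ | m := n
    · simp
    have hcard := Module.End.card_le_finrank_eigenspace (f := mulVecLin A) (μ := -b - c * κ s)
      (w := fun j : Fin m => Sum.elim (κ s • evec (m + 1) j.succ) (evec (m + 1) j.succ))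
      (LinearIndependent.of_comp (LinearMap.funLeft ℝ ℝ Sum.inr) (linearIndependent_evec_succ m))
      (fun j => heigen s j.succ (by simp))
    simpa using hcard

/-- Let `n ≥ 2` and let `A` be the `2n×2n` symmetric block matrix with
diagonal blocks `A_n^{α₁,β₁}`, `A_n^{α₂,β₂}` and both off-diagonal blocks `A_n^{γ,δ}`.
Set `a = α₁ − β₁`, `b = α₂ − β₂`, `c = γ − δ ≠ 0`, and let `κ₁ ≠ κ₂` be the two real
solutions of `c κ² + (b − a)κ − c = 0`.  Then for each `(i : ℕ) ≠ 0` and `s ∈ {1,2}`, the vector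
`(κ_s e_i | e_i)` is an eigenvector of `A` with eigenvalue `λ_s = −b − c κ_s`; in particular
`{λ₁, λ₂} = {(−(a+b) + √((a−b)² + 4c²))/2, (−(a+b) − √((a−b)² + 4c²))/2}`, each with
eigenspace dimension at least `n − 1`. -/
theorem two_orbit_bsm_redundant_spectrum {n : ℕ} (hn : 2 ≤ n)
    (α₁ β₁ α₂ β₂ γ δ a b c : ℝ)
    (ha : a = α₁ - β₁) (hb : b = α₂ - β₂) (hc : c = γ - δ) (hc0 : c ≠ 0)
    (κ : Fin 2 → ℝ)
    (hκroot : ∀ s, c * (κ s) ^ 2 + (b - a) * κ s - c = 0)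
    (hκne : κ 0 ≠ κ 1)
    (A : Matrix (Fin n ⊕ Fin n) (Fin n ⊕ Fin n) ℝ)
    (hA : A = Matrix.fromBlocks (uniformMatrix n α₁ β₁) (uniformMatrix n γ δ)
        (uniformMatrix n γ δ) (uniformMatrix n α₂ β₂)) :
    (∀ s : Fin 2, ∀ i : Fin n, (i : ℕ) ≠ 0 →
      A.mulVec (Sum.elim (κ s • evec n i) (evec n i))
        = (-b - c * κ s) • Sum.elim (κ s • evec n i) (evec n i)) ∧
    ({-b - c * κ 0, -b - c * κ 1} : Set ℝ)
      = {(-(a + b) + Real.sqrt ((a - b) ^ 2 + 4 * c ^ 2)) / 2,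
         (-(a + b) - Real.sqrt ((a - b) ^ 2 + 4 * c ^ 2)) / 2} ∧
    (∀ s : Fin 2,
      n - 1 ≤ Module.finrank ℝ
        (Module.End.eigenspace (Matrix.mulVecLin A) (-b - c * κ s))) :=
  two_orbit_bsm_redundant_spectrum_general α₁ β₁ α₂ β₂ γ δ a b c ha hb hc hc0 κ hκroot hκne A hA
end
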